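/- Let X be a real Banach space, A : X → Set X an accretive operator with zer A ≠ ∅, and for each γ > 0 let J_γ : X → X be a resolvent function of A. Let α ∈ [0,1), f : X → X an α-contraction, x ∈ X, e* ∈ X, and set J = 2⌈1/(1 − α)⌉, α_n = 2/((1 − α)(n + J)), λ_n = (n + J)/(n + J − 1), e_n = (1/(n + J)²) • e* for all n ∈ ℕ; let (x_n) be the VAMe iteration x_0 = x, x_{n+1} = α_n • f(x_n) + (1 − α_n) • J_{λ_n}(x_n) + e_n. Let z ∈ zer A and K_z ∈ ℕ, K_z ≥ 1, with K_z ≥ max{‖x − z‖, ‖f(z) − z‖/(1 − α)} + ⌈‖e*‖/(J − 1)⌉. Define Ψ₀(k) = 18·K_z·⌈1/(1 − α)⌉²·(k + 1) + 3·⌈‖e*‖⌉·⌈1/(1 − α)⌉·(k + 1) − 2⌈1/(1 − α)⌉ and Θ₀(k) = 36·K_z·⌈1/(1 − α)⌉²·(k + 1) + 6·⌈‖e*‖⌉·⌈1/(1 − α)⌉·(k + 1) − 2⌈1/(1 − α)⌉. Then Ψ₀ is a rate of (J_{λ_n})-asymptotic regularity of (x_n), and for every m ∈ ℕ, Θ₀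 is a rate of J_{λ_m}-asymptotic regularity of (x_n). -/

import Mathlib

/-!
Resolvents of an accretive operator are nonexpansive, do not increase the distance to a zero of
`A`, and satisfy `‖J_γ y - J_μ y‖ ≤ |1 - γ/μ| ‖J_μ y - y‖`. Since `α_n (1 - α) = 2/(n + J) ≤ 1`,
each step of the iteration is a convex combination pulling towards `z` plus a summable error, so
the iterates stay within `K_z` of `z`. With `t = n + J`, the differences `d_n = ‖x_{n+1} - x_n‖`
then satisfy `d_{n+1} ≤ (1 - 2/(t+1)) d_n + C/(t(t+1))`, for which `C/t` is a fixed point, so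
`d_n ≤ C/t`; rearranging the recursion gives `‖J_{λ_n} x_n - x_n‖ = O(1/t)`. Finally
`λ_m ≤ 2 λ_n`, so the resolvent identity transfers the rate to `J_{λ_m}` at the cost of a factor 2.
-/

open Finset

section Resolvent

variable {X : Type*} [NormedAddCommGroup X] [NormedSpace ℝ X]

def Accretive (A : X → Set X) : Prop :=
  ∀ x y u v : X, u ∈ A x → v ∈ A y → ∀ γ : ℝ, 0 < γ → ‖x - y‖ ≤ ‖x - y + γ • (u - v)‖

def IsResolvent (A : X → Set X) (Jr : ℝ → X → X) : Prop :=
  ∀ γ : ℝ, 0 < γ → ∀ x : X, γ⁻¹ • (x - Jr γ x) ∈ A (Jr γ x)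

namespace Accretive

variable {A : X → Set X} {Jr : ℝ → X → X} {γ μ : ℝ}

theorem norm_resolvent_sub_le_of_mem (hA : Accretive A) (hJ : IsResolvent A Jr) (hγ : 0 < γ)
    (p : X) {q u : X} (hu : u ∈ A q) : ‖Jr γ p - q‖ ≤ ‖p - q - γ • u‖ := by
  have key := hA _ _ _ _ (hJ γ hγ p) hu γ hγ
  rwa [smul_sub, smul_inv_smul₀ hγ.ne', show Jr γ p - q + (p - Jr γ p - γ • u) = p - q - γ • u by
    abel] at key

theorem norm_resolvent_sub_le_norm_sub (hA : Accretive A) (hJ : IsResolvent A Jr) (hγ : 0 < γ)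
    (p q : X) : ‖Jr γ p - Jr γ q‖ ≤ ‖p - q‖ := by
  have key := hA.norm_resolvent_sub_le_of_mem hJ hγ p (hJ γ hγ q)
  rwa [smul_inv_smul₀ hγ.ne', sub_sub, add_sub_cancel] at key

theorem norm_resolvent_sub_le_of_zero_mem (hA : Accretive A) (hJ : IsResolvent A Jr) (hγ : 0 < γ)
    (p : X) {z : X} (hz : 0 ∈ A z) : ‖Jr γ p - z‖ ≤ ‖p - z‖ := by
  simpa using hA.norm_resolvent_sub_le_of_mem hJ hγ p hz

theorem norm_resolvent_sub_resolvent_le (hA : Accretive A) (hJ : IsResolvent A Jr)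
    (hγ : 0 < γ) (hμ : 0 < μ) (y : X) :
    ‖Jr γ y - Jr μ y‖ ≤ |1 - γ / μ| * ‖Jr μ y - y‖ := by
  have key := hA.norm_resolvent_sub_le_of_mem hJ hγ y (hJ μ hμ y)
  have hrw : y - Jr μ y - γ • μ⁻¹ • (y - Jr μ y) = (1 - γ / μ) • -(Jr μ y - y) := by
    rw [div_eq_mul_inv]; module
  rwa [hrw, norm_smul, norm_neg, Real.norm_eq_abs] at key

theorem norm_resolvent_sub_self_le_two_mul (hA : Accretive A) (hJ : IsResolvent A Jr)
    (hγ : 0 < γ) (hμ : 0 < μ) (hγμ : γ ≤ 2 * μ) (y : X) :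
    ‖Jr γ y - y‖ ≤ 2 * ‖Jr μ y - y‖ := by
  have hratio : |1 - γ / μ| ≤ 1 := by
    rw [abs_le]
    constructor
    · linarith [(div_le_iff₀ hμ).mpr (by linarith : γ ≤ 2 * μ)]
    · linarith [div_pos hγ hμ]
  calc ‖Jr γ y - y‖ ≤ ‖Jr γ y - Jr μ y‖ + ‖Jr μ y - y‖ := norm_sub_le_norm_sub_add_norm_sub _ _ _
    _ ≤ 1 * ‖Jr μ y - y‖ + ‖Jr μ y - y‖ := by
      gcongr
      exact (hA.norm_resolvent_sub_resolvent_le hJ hγ hμ y).trans (by gcongr)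
    _ = 2 * ‖Jr μ y - y‖ := by ring

end Accretive

end Resolvent

theorem le_max_add_sum_of_le_one_sub_mul_add {s b ε : ℕ → ℝ} {M : ℝ}
    (hb0 : ∀ n, 0 ≤ b n) (hb1 : ∀ n, b n ≤ 1) (hε : ∀ n, 0 ≤ ε n)
    (hs : ∀ n, s (n + 1) ≤ (1 - b n) * s n + b n * M + ε n) (n : ℕ) :
    s n ≤ max (s 0) M + ∑ i ∈ range n, ε i := by
  induction n with
  | zero => simp
  | succ n ih =>
    set B := max (s 0) M + ∑ i ∈ range n, ε i
    have hMB : M ≤ B := le_add_of_le_of_nonneg (le_max_right _ _) (sum_nonneg fun i _ => hε i)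
    have hb1' : 0 ≤ 1 - b n := by linarith [hb1 n]
    calc s (n + 1) ≤ (1 - b n) * s n + b n * M + ε n := hs n
      _ ≤ (1 - b n) * B + b n * B + ε n := by gcongr; exact hb0 n
      _ = max (s 0) M + ∑ i ∈ range (n + 1), ε i := by rw [sum_range_succ]; ring

theorem le_div_of_le_one_sub_two_div_mul_add {d : ℕ → ℝ} {t D : ℝ} (ht : 1 ≤ t)
    (h0 : d 0 ≤ D / t)
    (hd : ∀ n : ℕ, d (n + 1) ≤ (1 - 2 / (n + t + 1)) * d n + D / ((n + t) * (n + t + 1)))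
    (n : ℕ) : d n ≤ D / (n + t) := by
  induction n with
  | zero => simpa using h0
  | succ n ih =>
    have hs : 1 ≤ (n : ℝ) + t := by linarith [n.cast_nonneg (α := ℝ)]
    have hfac : 0 ≤ 1 - 2 / (n + t + 1) := by
      rw [sub_nonneg, div_le_one (by linarith)]; linarith
    calc d (n + 1) ≤ (1 - 2 / (n + t + 1)) * d n + D / ((n + t) * (n + t + 1)) := hd n
      _ ≤ (1 - 2 / (n + t + 1)) * (D / (n + t)) + D / ((n + t) * (n + t + 1)) := by gcongr
      _ = D / ((n + 1 : ℕ) + t) := by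
        push_cast
        field_simp
        ring

theorem sum_range_one_div_add_sq_le {t : ℝ} (ht : 1 < t) (n : ℕ) :
    ∑ i ∈ range n, 1 / ((i : ℝ) + t) ^ 2 ≤ 1 / (t - 1) := by
  suffices h : ∑ i ∈ range n, 1 / ((i : ℝ) + t) ^ 2 ≤ 1 / (t - 1) - 1 / (n + t - 1) by
    have : 0 < (n : ℝ) + t - 1 := by linarith [n.cast_nonneg (α := ℝ)]
    linarith [one_div_pos.mpr this]
  induction n with
  | zero => simp
  | succ n ih =>
    have hs : 1 < (n : ℝ) + t := by linarith [n.cast_nonneg (α := ℝ)]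
    have htel : 1 / ((n : ℝ) + t) ^ 2 ≤ 1 / (n + t - 1) - 1 / (n + t) := by
      rw [div_sub_div _ _ (by linarith) (by linarith),
        div_le_div_iff₀ (by positivity) (by nlinarith)]
      nlinarith
    rw [sum_range_succ, Nat.cast_succ, show (n : ℝ) + 1 + t - 1 = n + t by ring]
    linarith

theorem norm_sub_le_two_mul_of_le {X : Type*} [SeminormedAddCommGroup X] {p q z : X} {K : ℝ}
    (hp : ‖p - z‖ ≤ K) (hq : ‖q - z‖ ≤ K) : ‖p - q‖ ≤ 2 * K :=
  (norm_sub_le_norm_sub_add_norm_sub p z q).trans (by rw [norm_sub_rev z]; linarith)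

section Iteration

variable {X : Type*} [NormedAddCommGroup X] [NormedSpace ℝ X]
  {f : X → X} {T : ℕ → X → X} {a : ℕ → ℝ} {e xs : ℕ → X} {α : ℝ}

theorem norm_smul_add_one_sub_smul_add_le {c : ℝ} (hc0 : 0 ≤ c) (hc1 : c ≤ 1) (u v w : X) :
    ‖c • u + (1 - c) • v + w‖ ≤ c * ‖u‖ + (1 - c) * ‖v‖ + ‖w‖ := by
  refine norm_add₃_le.trans_eq ?_
  rw [norm_smul, norm_smul, Real.norm_of_nonneg hc0, Real.norm_of_nonneg (sub_nonneg.mpr hc1)]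

theorem viscosity_norm_sub_le (hα0 : 0 ≤ α) (hα1 : α < 1)
    (hf : ∀ x y : X, ‖f x - f y‖ ≤ α * ‖x - y‖) {z : X} (hT : ∀ n p, ‖T n p - z‖ ≤ ‖p - z‖)
    (ha0 : ∀ n, 0 ≤ a n) (ha1 : ∀ n, a n ≤ 1)
    (hxs : ∀ n, xs (n + 1) = a n • f (xs n) + (1 - a n) • T n (xs n) + e n) (n : ℕ) :
    ‖xs n - z‖ ≤ max ‖xs 0 - z‖ (‖f z - z‖ / (1 - α)) + ∑ i ∈ range n, ‖e i‖ := by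
  have hβ : 0 < 1 - α := sub_pos.mpr hα1
  refine le_max_add_sum_of_le_one_sub_mul_add (b := fun n => a n * (1 - α))
    (s := fun n => ‖xs n - z‖)
    (ε := fun n => ‖e n‖) (fun n => mul_nonneg (ha0 n) hβ.le) (fun n => ?_)
    (fun n => norm_nonneg _) (fun n => ?_) n
  · nlinarith [ha0 n, ha1 n]
  have hfz : ‖f (xs n) - z‖ ≤ α * ‖xs n - z‖ + (1 - α) * (‖f z - z‖ / (1 - α)) := by
    rw [mul_div_cancel₀ _ hβ.ne']
    exact (norm_sub_le_norm_sub_add_norm_sub _ (f z) _).trans (by gcongr; exact hf _ _)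
  calc ‖xs (n + 1) - z‖
      = ‖a n • (f (xs n) - z) + (1 - a n) • (T n (xs n) - z) + e n‖ := by rw [hxs]; congr 1; module
    _ ≤ a n * ‖f (xs n) - z‖ + (1 - a n) * ‖T n (xs n) - z‖ + ‖e n‖ :=
      norm_smul_add_one_sub_smul_add_le (ha0 n) (ha1 n) _ _ _
    _ ≤ a n * (α * ‖xs n - z‖ + (1 - α) * (‖f z - z‖ / (1 - α)))
        + (1 - a n) * ‖xs n - z‖ + ‖e n‖ := by
      gcongr
      · exact ha0 n
      · linarith [ha1 n]
      · exact hT n _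
    _ = _ := by ring

theorem viscosity_norm_succ_sub_le (hf : ∀ x y : X, ‖f x - f y‖ ≤ α * ‖x - y‖)
    (hT : ∀ n p q, ‖T n p - T n q‖ ≤ ‖p - q‖) (ha0 : ∀ n, 0 ≤ a n) (ha1 : ∀ n, a n ≤ 1)
    (hxs : ∀ n, xs (n + 1) = a n • f (xs n) + (1 - a n) • T n (xs n) + e n) (n : ℕ) :
    ‖xs (n + 2) - xs (n + 1)‖ ≤ (1 - a (n + 1) * (1 - α)) * ‖xs (n + 1) - xs n‖
      + ‖T (n + 1) (xs n) - T n (xs n)‖ + |a (n + 1) - a n| * ‖f (xs n) - T n (xs n)‖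
      + ‖e (n + 1) - e n‖ := by
  set x := xs n
  set x' := xs (n + 1)
  have hT' : ‖T (n + 1) x' - T n x‖ ≤ ‖x' - x‖ + ‖T (n + 1) x - T n x‖ :=
    (norm_sub_le_norm_sub_add_norm_sub _ (T (n + 1) x) _).trans (by gcongr; exact hT _ _ _)
  have hrest : ‖(a (n + 1) - a n) • (f x - T n x) + (e (n + 1) - e n)‖
      ≤ |a (n + 1) - a n| * ‖f x - T n x‖ + ‖e (n + 1) - e n‖ :=
    (norm_add_le _ _).trans_eq (by rw [norm_smul, Real.norm_eq_abs])
  have h1 : 0 ≤ 1 - a (n + 1) := sub_nonneg.mpr (ha1 _)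
  calc ‖xs (n + 2) - x'‖
      = ‖(a (n + 1) • f x' + (1 - a (n + 1)) • T (n + 1) x' + e (n + 1))
          - (a n • f x + (1 - a n) • T n x + e n)‖ := by rw [← hxs, ← hxs]
    _ = ‖a (n + 1) • (f x' - f x) + (1 - a (n + 1)) • (T (n + 1) x' - T n x)
          + ((a (n + 1) - a n) • (f x - T n x) + (e (n + 1) - e n))‖ := by
        congr 1; module
    _ ≤ a (n + 1) * ‖f x' - f x‖ + (1 - a (n + 1)) * ‖T (n + 1) x' - T n x‖
          + ‖(a (n + 1) - a n) • (f x - T n x) + (e (n + 1) - e n)‖ :=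
        norm_smul_add_one_sub_smul_add_le (ha0 _) (ha1 _) _ _ _
    _ ≤ a (n + 1) * (α * ‖x' - x‖) + (1 - a (n + 1)) * (‖x' - x‖ + ‖T (n + 1) x - T n x‖)
          + (|a (n + 1) - a n| * ‖f x - T n x‖ + ‖e (n + 1) - e n‖) := by
        gcongr
        · exact ha0 _
        · exact hf _ _
    _ ≤ _ := by nlinarith [ha0 (n + 1), norm_nonneg (T (n + 1) x - T n x)]

theorem viscosity_norm_apply_sub_le (ha0 : ∀ n, 0 ≤ a n)
    (hxs : ∀ n, xs (n + 1) = a n • f (xs n) + (1 - a n) • T n (xs n) + e n) (n : ℕ) :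
    ‖T n (xs n) - xs n‖ ≤ ‖xs (n + 1) - xs n‖ + a n * ‖f (xs n) - T n (xs n)‖ + ‖e n‖ := by
  calc ‖T n (xs n) - xs n‖
      = ‖(xs (n + 1) - xs n) - a n • (f (xs n) - T n (xs n)) - e n‖ := by rw [hxs]; congr 1; module
    _ ≤ ‖xs (n + 1) - xs n‖ + ‖a n • (f (xs n) - T n (xs n))‖ + ‖e n‖ :=
        (norm_sub_le _ _).trans (by gcongr; exact norm_sub_le _ _)
    _ = _ := by rw [norm_smul, Real.norm_of_nonneg (ha0 n)]

end Iteration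

section Parameters

variable {α J : ℝ}

theorem natCast_add_pos_of_two_div_le (hα1 : α < 1) (hJ : 2 / (1 - α) ≤ J) (n : ℕ) :
    0 < (n : ℝ) + J := by
  linarith [n.cast_nonneg (α := ℝ), div_pos two_pos (sub_pos.mpr hα1)]

variable {a : ℕ → ℝ}

theorem vame_coeff_nonneg (hα1 : α < 1) (hJ : 2 / (1 - α) ≤ J)
    (ha : ∀ n : ℕ, a n = 2 / ((1 - α) * ((n : ℝ) + J))) (n : ℕ) : 0 ≤ a n := by
  have := natCast_add_pos_of_two_div_le hα1 hJ n
  have := sub_pos.mpr hα1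
  rw [ha]; positivity

theorem vame_coeff_le (hα1 : α < 1) (hJ : 2 / (1 - α) ≤ J)
    (ha : ∀ n : ℕ, a n = 2 / ((1 - α) * ((n : ℝ) + J))) (n : ℕ) : a n ≤ J / (n + J) := by
  have := natCast_add_pos_of_two_div_le hα1 hJ n
  rw [ha, ← div_div]
  gcongr

theorem vame_coeff_le_one (hα1 : α < 1) (hJ : 2 / (1 - α) ≤ J)
    (ha : ∀ n : ℕ, a n = 2 / ((1 - α) * ((n : ℝ) + J))) (n : ℕ) : a n ≤ 1 :=
  (vame_coeff_le hα1 hJ ha n).trans <| (div_le_one (natCast_add_pos_of_two_div_le hα1 hJ n)).mpr <|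
    le_add_of_nonneg_left n.cast_nonneg

theorem vame_coeff_mul_one_sub (hα1 : α < 1)
    (ha : ∀ n : ℕ, a n = 2 / ((1 - α) * ((n : ℝ) + J))) (n : ℕ) :
    a n * (1 - α) = 2 / (n + J) := by
  rw [ha, div_mul_eq_mul_div, mul_comm 2, mul_div_mul_left _ _ (sub_pos.mpr hα1).ne']

theorem abs_vame_coeff_succ_sub_le (hα1 : α < 1) (hJ : 2 / (1 - α) ≤ J)
    (ha : ∀ n : ℕ, a n = 2 / ((1 - α) * ((n : ℝ) + J))) (n : ℕ) :
    |a (n + 1) - a n| ≤ J / ((n + J) * (n + J + 1)) := by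
  have ht := natCast_add_pos_of_two_div_le hα1 hJ n
  have hdiff : a (n + 1) - a n = -(2 / (1 - α) / ((n + J) * (n + J + 1))) := by
    have h1 : (n : ℝ) + 1 + J ≠ 0 := by linarith
    rw [ha, ha]; push_cast; field_simp; ring
  rw [hdiff, abs_neg, abs_of_nonneg (by positivity)]
  gcongr

theorem vame_step_pos (hJ : 1 < J) (n : ℕ) : 0 < ((n : ℝ) + J) / (n + J - 1) := by
  have : 1 < (n : ℝ) + J := by linarith [n.cast_nonneg (α := ℝ)]
  exact div_pos (by linarith) (by linarith)

variable {lam : ℕ → ℝ}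

theorem vame_step_le_two_mul (hJ : 2 ≤ J)
    (hlam : ∀ n : ℕ, lam n = ((n : ℝ) + J) / ((n : ℝ) + J - 1)) (m n : ℕ) :
    lam m ≤ 2 * lam n := by
  have hm : 2 ≤ (m : ℝ) + J := by linarith [m.cast_nonneg (α := ℝ)]
  have hn : 2 ≤ (n : ℝ) + J := by linarith [n.cast_nonneg (α := ℝ)]
  have h2 : lam m ≤ 2 := by rw [hlam, div_le_iff₀ (by linarith)]; linarith
  have h1 : 1 ≤ lam n := by rw [hlam, le_div_iff₀ (by linarith)]; linarith
  linarith

theorem abs_one_sub_vame_step_div (hJ : 1 < J)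
    (hlam : ∀ n : ℕ, lam n = ((n : ℝ) + J) / ((n : ℝ) + J - 1)) (n : ℕ) :
    |1 - lam (n + 1) / lam n| = 1 / (n + J) ^ 2 := by
  have ht : 1 < (n : ℝ) + J := by linarith [n.cast_nonneg (α := ℝ)]
  have h0 : (n : ℝ) + J - 1 ≠ 0 := by linarith
  have h1 : (n : ℝ) + J ≠ 0 := by linarith
  have hsucc : lam (n + 1) = (n + J + 1) / (n + J) := by
    rw [hlam]; push_cast; ring_nf
  have hratio : 1 - lam (n + 1) / lam n = 1 / (n + J) ^ 2 := by
    rw [hsucc, hlam]; field_simp; ring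
  rw [hratio, abs_of_nonneg (by positivity)]

end Parameters

section Errors

variable {X : Type*} [NormedAddCommGroup X] [NormedSpace ℝ X] {J : ℝ} {estar : X} {e : ℕ → X}

theorem norm_vame_err (he : ∀ n : ℕ, e n = (1 / ((n : ℝ) + J) ^ 2) • estar) (n : ℕ) :
    ‖e n‖ = ‖estar‖ / (n + J) ^ 2 := by
  rw [he, norm_smul, Real.norm_of_nonneg (by positivity), one_div_mul_eq_div]

theorem norm_vame_err_succ_sub (hJ : 0 < J) (he : ∀ n : ℕ, e n = (1 / ((n : ℝ) + J) ^ 2) • estar)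
    (n : ℕ) : ‖e (n + 1) - e n‖ = ‖estar‖ * (1 / (n + J) ^ 2 - 1 / (n + J + 1) ^ 2) := by
  have ht : 0 < (n : ℝ) + J := by linarith [n.cast_nonneg (α := ℝ)]
  have hsucc : e (n + 1) = (1 / ((n : ℝ) + J + 1) ^ 2) • estar := by
    rw [he]; congr 1; push_cast; ring
  have hmono : 1 / ((n : ℝ) + J + 1) ^ 2 ≤ 1 / (n + J) ^ 2 :=
    one_div_le_one_div_of_le (by positivity) (pow_le_pow_left₀ ht.le (by linarith) 2)
  rw [hsucc, he, ← sub_smul, norm_smul, Real.norm_eq_abs, abs_sub_comm,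
    abs_of_nonneg (sub_nonneg.mpr hmono), mul_comm]

theorem sum_norm_vame_err_le (hJ : 1 < J)
    (he : ∀ n : ℕ, e n = (1 / ((n : ℝ) + J) ^ 2) • estar) (n : ℕ) :
    ∑ i ∈ range n, ‖e i‖ ≤ ‖estar‖ / (J - 1) :=
  calc ∑ i ∈ range n, ‖e i‖ = ‖estar‖ * ∑ i ∈ range n, 1 / ((i : ℝ) + J) ^ 2 := by
        simp only [mul_sum, norm_vame_err he, mul_one_div]
    _ ≤ ‖estar‖ * (1 / (J - 1)) := by gcongr; exact sum_range_one_div_add_sq_le hJ n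
    _ = ‖estar‖ / (J - 1) := mul_one_div _ _

end Errors

section VAMe

variable {X : Type*} [NormedAddCommGroup X] [NormedSpace ℝ X]
  {A : X → Set X} {Jr : ℝ → X → X} {f : X → X} {α J K : ℝ} {estar z : X}
  {a lam : ℕ → ℝ} {e xs : ℕ → X}

theorem vame_norm_sub_le (hA : Accretive A) (hJr : IsResolvent A Jr) (hα0 : 0 ≤ α)
    (hα1 : α < 1) (hf : ∀ x y, ‖f x - f y‖ ≤ α * ‖x - y‖) (hJ2 : 2 ≤ J)
    (hJα : 2 / (1 - α) ≤ J) (ha : ∀ n : ℕ, a n = 2 / ((1 - α) * ((n : ℝ) + J)))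
    (hlam : ∀ n : ℕ, lam n = ((n : ℝ) + J) / ((n : ℝ) + J - 1))
    (he : ∀ n : ℕ, e n = (1 / ((n : ℝ) + J) ^ 2) • estar)
    (hxs : ∀ n, xs (n + 1) = a n • f (xs n) + (1 - a n) • Jr (lam n) (xs n) + e n)
    (hz : 0 ∈ A z) (n : ℕ) :
    ‖xs n - z‖ ≤ max ‖xs 0 - z‖ (‖f z - z‖ / (1 - α)) + ‖estar‖ / (J - 1) := by
  have hJ1 : 1 < J := by linarith
  refine (viscosity_norm_sub_le hα0 hα1 hf
    (fun n p => hA.norm_resolvent_sub_le_of_zero_mem hJr (hlam n ▸ vame_step_pos hJ1 n) p hz)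
    (vame_coeff_nonneg hα1 hJα ha) (vame_coeff_le_one hα1 hJα ha) hxs n).trans ?_
  gcongr
  exact sum_norm_vame_err_le hJ1 he n

theorem vame_error_terms_le {s J K E : ℝ} (hs : 1 ≤ s) (hJ : 2 ≤ J) (hK : 0 ≤ K) (hE : 0 ≤ E) :
    1 / s ^ 2 * (2 * K) + J / (s * (s + 1)) * (2 * K) + E * (1 / s ^ 2 - 1 / (s + 1) ^ 2)
      ≤ (4 * K * J + 2 * E) / (s * (s + 1)) := by
  have hgap : (4 * K * J + 2 * E) / (s * (s + 1)) - (1 / s ^ 2 * (2 * K)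
      + J / (s * (s + 1)) * (2 * K) + E * (1 / s ^ 2 - 1 / (s + 1) ^ 2))
      = (2 * K * (s + 1) * (J * s - s - 1) + E * (2 * s ^ 2 - 1)) / (s ^ 2 * (s + 1) ^ 2) := by
    field_simp; ring
  rw [← sub_nonneg, hgap]
  have : 0 ≤ J * s - s - 1 := by nlinarith
  have : 0 ≤ 2 * s ^ 2 - 1 := by nlinarith
  positivity

theorem vame_norm_succ_sub_le (hA : Accretive A) (hJr : IsResolvent A Jr) (hα1 : α < 1)
    (hf : ∀ x y, ‖f x - f y‖ ≤ α * ‖x - y‖) (hJ2 : 2 ≤ J) (hJα : 2 / (1 - α) ≤ J)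
    (ha : ∀ n : ℕ, a n = 2 / ((1 - α) * ((n : ℝ) + J)))
    (hlam : ∀ n : ℕ, lam n = ((n : ℝ) + J) / ((n : ℝ) + J - 1))
    (he : ∀ n : ℕ, e n = (1 / ((n : ℝ) + J) ^ 2) • estar)
    (hxs : ∀ n, xs (n + 1) = a n • f (xs n) + (1 - a n) • Jr (lam n) (xs n) + e n)
    (hK : ∀ n, ‖xs n - z‖ ≤ K) (hfT : ∀ n, ‖f (xs n) - Jr (lam n) (xs n)‖ ≤ 2 * K)
    (hTx : ∀ n, ‖Jr (lam n) (xs n) - xs n‖ ≤ 2 * K) (n : ℕ) :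
    ‖xs (n + 1) - xs n‖ ≤ (4 * K * J + 2 * ‖estar‖) / (n + J) := by
  have hJ1 : 1 < J := by linarith
  have hK0 : 0 ≤ K := (norm_nonneg _).trans (hK 0)
  have hlam0 : ∀ n, 0 < lam n := fun n => hlam n ▸ vame_step_pos hJ1 n
  refine le_div_of_le_one_sub_two_div_mul_add (d := fun n => ‖xs (n + 1) - xs n‖) hJ1.le ?_
    (fun n => ?_) n
  · show ‖xs 1 - xs 0‖ ≤ _
    rw [le_div_iff₀ (by linarith)]
    nlinarith [norm_sub_le_two_mul_of_le (hK 1) (hK 0), norm_nonneg estar]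
  have hs : 1 ≤ (n : ℝ) + J := by linarith [n.cast_nonneg (α := ℝ)]
  have hcoeff : 1 - a (n + 1) * (1 - α) = 1 - 2 / (n + J + 1) := by
    rw [vame_coeff_mul_one_sub hα1 ha]; push_cast; ring_nf
  have hres : ‖Jr (lam (n + 1)) (xs n) - Jr (lam n) (xs n)‖ ≤ 1 / (n + J) ^ 2 * (2 * K) := by
    refine (hA.norm_resolvent_sub_resolvent_le hJr (hlam0 _) (hlam0 n) _).trans ?_
    rw [abs_one_sub_vame_step_div hJ1 hlam]
    gcongr
    exact hTx n
  calc ‖xs (n + 1 + 1) - xs (n + 1)‖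
      ≤ (1 - a (n + 1) * (1 - α)) * ‖xs (n + 1) - xs n‖
        + ‖Jr (lam (n + 1)) (xs n) - Jr (lam n) (xs n)‖
        + |a (n + 1) - a n| * ‖f (xs n) - Jr (lam n) (xs n)‖ + ‖e (n + 1) - e n‖ :=
      viscosity_norm_succ_sub_le hf (fun n => hA.norm_resolvent_sub_le_norm_sub hJr (hlam0 n))
        (vame_coeff_nonneg hα1 hJα ha) (vame_coeff_le_one hα1 hJα ha) hxs n
    _ ≤ (1 - 2 / (n + J + 1)) * ‖xs (n + 1) - xs n‖ + (1 / (n + J) ^ 2 * (2 * K)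
        + J / ((n + J) * (n + J + 1)) * (2 * K)
        + ‖estar‖ * (1 / (n + J) ^ 2 - 1 / (n + J + 1) ^ 2)) := by
      have hda : |a (n + 1) - a n| * ‖f (xs n) - Jr (lam n) (xs n)‖
          ≤ J / ((n + J) * (n + J + 1)) * (2 * K) :=
        mul_le_mul (abs_vame_coeff_succ_sub_le hα1 hJα ha n) (hfT n) (norm_nonneg _)
          (by positivity)
      rw [hcoeff, norm_vame_err_succ_sub (by linarith) he]
      linarith
    _ ≤ _ := by gcongr; exact vame_error_terms_le hs hJ2 hK0 (norm_nonneg _)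

theorem vame_norm_resolvent_sub_le (hA : Accretive A) (hJr : IsResolvent A Jr) (hα0 : 0 ≤ α)
    (hα1 : α < 1) (hf : ∀ x y, ‖f x - f y‖ ≤ α * ‖x - y‖) (hJ2 : 2 ≤ J)
    (hJα : 2 / (1 - α) ≤ J) (ha : ∀ n : ℕ, a n = 2 / ((1 - α) * ((n : ℝ) + J)))
    (hlam : ∀ n : ℕ, lam n = ((n : ℝ) + J) / ((n : ℝ) + J - 1))
    (he : ∀ n : ℕ, e n = (1 / ((n : ℝ) + J) ^ 2) • estar)
    (hxs : ∀ n, xs (n + 1) = a n • f (xs n) + (1 - a n) • Jr (lam n) (xs n) + e n)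
    (hz : 0 ∈ A z) (hK : ∀ n, ‖xs n - z‖ ≤ K) (hfz : ‖f z - z‖ ≤ (1 - α) * K) (n : ℕ) :
    ‖Jr (lam n) (xs n) - xs n‖ ≤ (6 * K * J + 3 * ‖estar‖) / (n + J) := by
  have hJ1 : 1 < J := by linarith
  have hTK : ∀ n, ‖Jr (lam n) (xs n) - z‖ ≤ K := fun n =>
    (hA.norm_resolvent_sub_le_of_zero_mem hJr (hlam n ▸ vame_step_pos hJ1 n) _ hz).trans (hK n)
  have hfK : ∀ n, ‖f (xs n) - z‖ ≤ K := fun n => by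
    have := mul_le_mul_of_nonneg_left (hK n) hα0
    linarith [norm_sub_le_norm_sub_add_norm_sub (f (xs n)) (f z) z, hf (xs n) z]
  have hfT : ∀ n, ‖f (xs n) - Jr (lam n) (xs n)‖ ≤ 2 * K := fun n =>
    norm_sub_le_two_mul_of_le (hfK n) (hTK n)
  have hTx : ∀ n, ‖Jr (lam n) (xs n) - xs n‖ ≤ 2 * K := fun n =>
    norm_sub_le_two_mul_of_le (hTK n) (hK n)
  have hs : 1 ≤ (n : ℝ) + J := by linarith [n.cast_nonneg (α := ℝ)]
  have herr : ‖e n‖ ≤ ‖estar‖ / (n + J) := by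
    rw [norm_vame_err he]
    exact div_le_div_of_nonneg_left (norm_nonneg _) (by linarith) (by nlinarith)
  calc ‖Jr (lam n) (xs n) - xs n‖
      ≤ ‖xs (n + 1) - xs n‖ + a n * ‖f (xs n) - Jr (lam n) (xs n)‖ + ‖e n‖ :=
        viscosity_norm_apply_sub_le (vame_coeff_nonneg hα1 hJα ha) hxs n
    _ ≤ (4 * K * J + 2 * ‖estar‖) / (n + J) + J / (n + J) * (2 * K) + ‖estar‖ / (n + J) := by
        gcongr
        · exact vame_norm_succ_sub_le hA hJr hα1 hf hJ2 hJα ha hlam he hxs hK hfT hTx n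
        · exact vame_coeff_le hα1 hJα ha n
        · exact hfT n
    _ = (6 * K * J + 3 * ‖estar‖) / (n + J) := by ring

theorem vame_norm_resolvent_sub_le_of_ceil (hA : Accretive A) (hJr : IsResolvent A Jr)
    (hα0 : 0 ≤ α) (hα1 : α < 1) (hf : ∀ x y, ‖f x - f y‖ ≤ α * ‖x - y‖) {c Jn Kz : ℕ}
    (hc : 1 / (1 - α) ≤ c) (hJn : Jn = 2 * c)
    (ha : ∀ n : ℕ, a n = 2 / ((1 - α) * ((n : ℝ) + Jn)))
    (hlam : ∀ n : ℕ, lam n = ((n : ℝ) + Jn) / ((n : ℝ) + Jn - 1))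
    (he : ∀ n : ℕ, e n = (1 / ((n : ℝ) + Jn) ^ 2) • estar)
    (hxs : ∀ n, xs (n + 1) = a n • f (xs n) + (1 - a n) • Jr (lam n) (xs n) + e n)
    (hz : 0 ∈ A z)
    (hKz : max ‖xs 0 - z‖ (‖f z - z‖ / (1 - α)) + (⌈‖estar‖ / ((Jn : ℝ) - 1)⌉₊ : ℝ) ≤ Kz)
    (n : ℕ) :
    ‖Jr (lam n) (xs n) - xs n‖ ≤ ((12 * Kz * c + 3 * ⌈‖estar‖⌉₊ : ℕ) : ℝ) / (n + Jn) := by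
  have hβ : 0 < 1 - α := sub_pos.mpr hα1
  have hJc : (Jn : ℝ) = 2 * c := by rw [hJn]; push_cast; ring
  have hJ2 : 2 ≤ (Jn : ℝ) := by
    rw [hJc]; linarith [one_le_one_div hβ (by linarith : 1 - α ≤ 1)]
  have hJα : 2 / (1 - α) ≤ Jn := by rw [hJc, ← mul_one_div]; gcongr
  have hK : ∀ n, ‖xs n - z‖ ≤ Kz := fun n =>
    (vame_norm_sub_le hA hJr hα0 hα1 hf hJ2 hJα ha hlam he hxs hz n).trans <|
      (add_le_add le_rfl (Nat.le_ceil _)).trans hKz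
  have hfz : ‖f z - z‖ ≤ (1 - α) * Kz := by
    rw [← div_le_iff₀' hβ]
    exact (le_max_right _ _).trans ((le_add_of_nonneg_right (Nat.cast_nonneg _)).trans hKz)
  refine (vame_norm_resolvent_sub_le hA hJr hα0 hα1 hf hJ2 hJα ha hlam he hxs hz hK hfz n).trans ?_
  gcongr
  push_cast
  rw [hJc]
  linarith [Nat.le_ceil ‖estar‖]

end VAMe

theorem vame_rate_coeff_le {K c E k : ℕ} (hc : 1 ≤ c) :
    (12 * K * c + 3 * E) * (k + 1) ≤ 18 * K * c ^ 2 * (k + 1) + 3 * E * c * (k + 1) := by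
  have hK : 12 * K * c ≤ 18 * K * c ^ 2 :=
    Nat.mul_le_mul (Nat.mul_le_mul_right K (by norm_num)) (Nat.le_self_pow two_ne_zero c)
  have hE : 3 * E ≤ 3 * E * c := Nat.le_mul_of_pos_right _ hc
  calc (12 * K * c + 3 * E) * (k + 1) ≤ (18 * K * c ^ 2 + 3 * E * c) * (k + 1) := by gcongr
    _ = _ := by ring

theorem div_le_one_div_succ_of_mul_le {B t : ℝ} {k : ℕ} (ht : 0 < t) (h : B * (k + 1) ≤ t) :
    B / t ≤ 1 / (k + 1) := by
  rw [div_le_div_iff₀ ht (by positivity)]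
  linarith

theorem stmt_18_general {X : Type*} [NormedAddCommGroup X] [NormedSpace ℝ X]
    (A : X → Set X)
    (hA : ∀ x y u v : X, u ∈ A x → v ∈ A y → ∀ γ : ℝ, 0 < γ →
      ‖x - y‖ ≤ ‖x - y + γ • (u - v)‖)
    (Jr : ℝ → X → X)
    (hJ : ∀ γ : ℝ, 0 < γ → ∀ x : X, γ⁻¹ • (x - Jr γ x) ∈ A (Jr γ x))
    (α : ℝ) (hα0 : 0 ≤ α) (hα1 : α < 1)
    (f : X → X) (hf : ∀ x y : X, ‖f x - f y‖ ≤ α * ‖x - y‖)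
    (x : X) (estar : X)
    (Jn : ℕ) (hJn : Jn = 2 * ⌈1 / (1 - α)⌉₊)
    (a : ℕ → ℝ) (ha : ∀ n : ℕ, a n = 2 / ((1 - α) * ((n : ℝ) + Jn)))
    (lam : ℕ → ℝ) (hlamdef : ∀ n : ℕ, lam n = ((n : ℝ) + Jn) / ((n : ℝ) + Jn - 1))
    (e : ℕ → X) (he : ∀ n : ℕ, e n = (1 / ((n : ℝ) + Jn) ^ 2) • estar)
    (xs : ℕ → X) (hxs0 : xs 0 = x)
    (hxs : ∀ n : ℕ, xs (n + 1) = a n • f (xs n) + (1 - a n) • Jr (lam n) (xs n) + e n)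
    (z : X) (hz : (0 : X) ∈ A z)
    (Kz : ℕ)
    (hKz : max ‖x - z‖ (‖f z - z‖ / (1 - α)) +
      (⌈‖estar‖ / ((Jn : ℝ) - 1)⌉₊ : ℝ) ≤ (Kz : ℝ))
    (Ψ₀ : ℕ → ℕ)
    (hΨ₀ : ∀ k : ℕ, Ψ₀ k =
      18 * Kz * ⌈1 / (1 - α)⌉₊ ^ 2 * (k + 1) +
        3 * ⌈‖estar‖⌉₊ * ⌈1 / (1 - α)⌉₊ * (k + 1) - 2 * ⌈1 / (1 - α)⌉₊)
    (Θ₀ : ℕ → ℕ)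
    (hΘ₀ : ∀ k : ℕ, Θ₀ k =
      36 * Kz * ⌈1 / (1 - α)⌉₊ ^ 2 * (k + 1) +
        6 * ⌈‖estar‖⌉₊ * ⌈1 / (1 - α)⌉₊ * (k + 1) - 2 * ⌈1 / (1 - α)⌉₊) :
    (∀ k : ℕ, ∀ n, Ψ₀ k ≤ n → ‖Jr (lam n) (xs n) - xs n‖ ≤ 1 / (k + 1)) ∧
    (∀ m : ℕ, ∀ k : ℕ, ∀ n, Θ₀ k ≤ n → ‖Jr (lam m) (xs n) - xs n‖ ≤ 1 / (k + 1)) := by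
  replace hA : Accretive A := hA
  have hc : 1 / (1 - α) ≤ (⌈1 / (1 - α)⌉₊ : ℝ) := Nat.le_ceil _
  set c := ⌈1 / (1 - α)⌉₊
  have hc1 : 1 ≤ c := by
    exact_mod_cast (one_le_one_div (sub_pos.mpr hα1) (by linarith)).trans hc
  have hreg := vame_norm_resolvent_sub_le_of_ceil hA hJ hα0 hα1 hf hc hJn ha hlamdef he hxs hz
    (hxs0 ▸ hKz)
  have hJ2 : (2 : ℝ) ≤ Jn := by exact_mod_cast (show 2 ≤ Jn by omega)
  have ht : ∀ n : ℕ, 0 < (n : ℝ) + Jn := fun n => by positivity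
  have hlam0 : ∀ n, 0 < lam n := fun n => hlamdef n ▸ vame_step_pos (by linarith) n
  refine ⟨fun k n hn => (hreg n).trans (div_le_one_div_succ_of_mul_le (ht n) ?_),
    fun m k n hn => ?_⟩
  · rw [hΨ₀, tsub_le_iff_right, ← hJn] at hn
    exact_mod_cast (vame_rate_coeff_le hc1).trans hn
  rw [hΘ₀, tsub_le_iff_right, ← hJn] at hn
  calc ‖Jr (lam m) (xs n) - xs n‖ ≤ 2 * ‖Jr (lam n) (xs n) - xs n‖ :=
        hA.norm_resolvent_sub_self_le_two_mul hJ (hlam0 m) (hlam0 n)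
          (vame_step_le_two_mul hJ2 hlamdef m n) _
    _ ≤ 2 * ((12 * Kz * c + 3 * ⌈‖estar‖⌉₊ : ℕ) : ℝ) / (n + Jn) := by
        rw [mul_div_assoc]; gcongr; exact hreg n
    _ ≤ 1 / (k + 1) := by
        refine div_le_one_div_succ_of_mul_le (ht n) ?_
        have := vame_rate_coeff_le (K := Kz) (E := ⌈‖estar‖⌉₊) (k := k) hc1
        exact_mod_cast (show 2 * (12 * Kz * c + 3 * ⌈‖estar‖⌉₊) * (k + 1) ≤ n + Jn by linarith)

/-- Linear rates of `(J_{λ_n})`- and `J_{λ_m}`-asymptotic regularity of the VAMe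
iteration for concrete instances of the parameter sequences. -/
theorem stmt_18 {X : Type*} [NormedAddCommGroup X] [NormedSpace ℝ X] [CompleteSpace X]
    (A : X → Set X)
    (hA : ∀ x y u v : X, u ∈ A x → v ∈ A y → ∀ γ : ℝ, 0 < γ →
      ‖x - y‖ ≤ ‖x - y + γ • (u - v)‖)
    (hzer : ∃ z : X, (0 : X) ∈ A z)
    (Jr : ℝ → X → X)
    (hJ : ∀ γ : ℝ, 0 < γ → ∀ x : X, γ⁻¹ • (x - Jr γ x) ∈ A (Jr γ x))
    (α : ℝ) (hα0 : 0 ≤ α) (hα1 : α < 1)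
    (f : X → X) (hf : ∀ x y : X, ‖f x - f y‖ ≤ α * ‖x - y‖)
    (x : X) (estar : X)
    (Jn : ℕ) (hJn : Jn = 2 * ⌈1 / (1 - α)⌉₊)
    (a : ℕ → ℝ) (ha : ∀ n : ℕ, a n = 2 / ((1 - α) * ((n : ℝ) + Jn)))
    (lam : ℕ → ℝ) (hlamdef : ∀ n : ℕ, lam n = ((n : ℝ) + Jn) / ((n : ℝ) + Jn - 1))
    (e : ℕ → X) (he : ∀ n : ℕ, e n = (1 / ((n : ℝ) + Jn) ^ 2) • estar)
    (xs : ℕ → X) (hxs0 : xs 0 = x)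
    (hxs : ∀ n : ℕ, xs (n + 1) = a n • f (xs n) + (1 - a n) • Jr (lam n) (xs n) + e n)
    (z : X) (hz : (0 : X) ∈ A z)
    (Kz : ℕ) (hKz1 : 1 ≤ Kz)
    (hKz : max ‖x - z‖ (‖f z - z‖ / (1 - α)) +
      (⌈‖estar‖ / ((Jn : ℝ) - 1)⌉₊ : ℝ) ≤ (Kz : ℝ))
    (Ψ₀ : ℕ → ℕ)
    (hΨ₀ : ∀ k : ℕ, Ψ₀ k =
      18 * Kz * ⌈1 / (1 - α)⌉₊ ^ 2 * (k + 1) +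
        3 * ⌈‖estar‖⌉₊ * ⌈1 / (1 - α)⌉₊ * (k + 1) - 2 * ⌈1 / (1 - α)⌉₊)
    (Θ₀ : ℕ → ℕ)
    (hΘ₀ : ∀ k : ℕ, Θ₀ k =
      36 * Kz * ⌈1 / (1 - α)⌉₊ ^ 2 * (k + 1) +
        6 * ⌈‖estar‖⌉₊ * ⌈1 / (1 - α)⌉₊ * (k + 1) - 2 * ⌈1 / (1 - α)⌉₊) :
    (∀ k : ℕ, ∀ n, Ψ₀ k ≤ n → ‖Jr (lam n) (xs n) - xs n‖ ≤ 1 / (k + 1)) ∧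
    (∀ m : ℕ, ∀ k : ℕ, ∀ n, Θ₀ k ≤ n → ‖Jr (lam m) (xs n) - xs n‖ ≤ 1 / (k + 1)) :=
  stmt_18_general A hA Jr hJ α hα0 hα1 f hf x estar Jn hJn a ha lam hlamdef e he xs hxs0 hxs z hz Kz
    hKz Ψ₀ hΨ₀ Θ₀ hΘ₀
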